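/- Suppose (x*_I, x*_C) ∈ X_MO maximizes z̄ᵏ(C_I^{1:ℓ} x_I + C_C^{1:ℓ} x_C) − (c⁰_I·x_I + c⁰_C·x_C) over X_MO, and let ζ* = C_I^{1:ℓ} x*_I + C_C^{1:ℓ} x*_C. Then z(ζ*) = z̄(ζ*; x*_I); that is, ζ* belongs to the stability region 𝒞(x*_I) = {ζ ∈ 𝒞 : z(ζ) = z̄(ζ; x*_I)}, which is therefore nonempty. -/

import Mathlib

open Matrix Filter Topology Set

noncomputable section

/-- Primal feasibility for the restricted LP with data `(ζ, β)`. -/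
def LPfeas {l m nc : ℕ} (CC : Matrix (Fin l) (Fin nc) ℝ) (AC : Matrix (Fin m) (Fin nc) ℝ)
    (ζ : Fin l → ℝ) (β : Fin m → ℝ) (x : Fin nc → ℝ) : Prop :=
  (∀ j, 0 ≤ x j) ∧ CC.mulVec x ≤ ζ ∧ AC.mulVec x = β

/-- The restricted LP value function, taking the value `+∞` when infeasible. -/
def zLP {l m nc : ℕ} (cC : Fin nc → ℝ) (CC : Matrix (Fin l) (Fin nc) ℝ)
    (AC : Matrix (Fin m) (Fin nc) ℝ) (ζ : Fin l → ℝ) (β : Fin m → ℝ) : EReal :=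
  sInf {y : EReal | ∃ x : Fin nc → ℝ, LPfeas CC AC ζ β x ∧ y = ((cC ⬝ᵥ x : ℝ) : EReal)}

/-- The finite domain (feasibility region) of the restricted LP value function. -/
def CLP {l m nc : ℕ} (CC : Matrix (Fin l) (Fin nc) ℝ) (AC : Matrix (Fin m) (Fin nc) ℝ)
    (β : Fin m → ℝ) : Set (Fin l → ℝ) :=
  {ζ | ∃ x : Fin nc → ℝ, LPfeas CC AC ζ β x}

/-- The dual feasible region `P_D`. -/
def PD {l m nc : ℕ} (cC : Fin nc → ℝ) (CC : Matrix (Fin l) (Fin nc) ℝ)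
    (AC : Matrix (Fin m) (Fin nc) ℝ) : Set ((Fin l → ℝ) × (Fin m → ℝ)) :=
  {uv | uv.1 ≤ 0 ∧ CC.transpose.mulVec uv.1 + AC.transpose.mulVec uv.2 ≤ cC}

/-- Projection of the optimal face of the dual LP onto the `u`-coordinates. -/
def projOPT {l m nc : ℕ} (cC : Fin nc → ℝ) (CC : Matrix (Fin l) (Fin nc) ℝ)
    (AC : Matrix (Fin m) (Fin nc) ℝ) (ζ : Fin l → ℝ) (β : Fin m → ℝ) : Set (Fin l → ℝ) :=
  {u | ∃ v : Fin m → ℝ, (u, v) ∈ PD cC CC AC ∧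
    ((ζ ⬝ᵥ u + β ⬝ᵥ v : ℝ) : EReal) = zLP cC CC AC ζ β}

/-- A real vector with natural-number entries. -/
def IsNatVec {r : ℕ} (x : Fin r → ℝ) : Prop := ∀ i, ∃ k : ℕ, x i = (k : ℝ)

/-- The MILP feasible region `X_MO`. -/
def XMO {m nc r : ℕ} (AI : Matrix (Fin m) (Fin r) ℝ) (AC : Matrix (Fin m) (Fin nc) ℝ)
    (b : Fin m → ℝ) : Set ((Fin r → ℝ) × (Fin nc → ℝ)) :=
  {p | IsNatVec p.1 ∧ (∀ j, 0 ≤ p.2 j) ∧ AI.mulVec p.1 + AC.mulVec p.2 = b}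

/-- The restricted feasible region `S(ζ)`. -/
def Sreg {l m nc r : ℕ} (AI : Matrix (Fin m) (Fin r) ℝ) (AC : Matrix (Fin m) (Fin nc) ℝ)
    (b : Fin m → ℝ) (CI : Matrix (Fin l) (Fin r) ℝ) (CC : Matrix (Fin l) (Fin nc) ℝ)
    (ζ : Fin l → ℝ) : Set ((Fin r → ℝ) × (Fin nc → ℝ)) :=
  {p ∈ XMO AI AC b | CI.mulVec p.1 + CC.mulVec p.2 ≤ ζ}

/-- The restricted value function `z`, taking the value `+∞` when `S(ζ) = ∅`. -/
def zRVF {l m nc r : ℕ} (cI : Fin r → ℝ) (cC : Fin nc → ℝ) (AI : Matrix (Fin m) (Fin r) ℝ)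
    (AC : Matrix (Fin m) (Fin nc) ℝ) (b : Fin m → ℝ) (CI : Matrix (Fin l) (Fin r) ℝ)
    (CC : Matrix (Fin l) (Fin nc) ℝ) (ζ : Fin l → ℝ) : EReal :=
  sInf {y : EReal | ∃ p ∈ Sreg AI AC b CI CC ζ, y = ((cI ⬝ᵥ p.1 + cC ⬝ᵥ p.2 : ℝ) : EReal)}

/-- The finite domain `𝒞` of the restricted value function. -/
def Cdom {l m nc r : ℕ} (AI : Matrix (Fin m) (Fin r) ℝ) (AC : Matrix (Fin m) (Fin nc) ℝ)
    (b : Fin m → ℝ) (CI : Matrix (Fin l) (Fin r) ℝ) (CC : Matrix (Fin l) (Fin nc) ℝ) :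
    Set (Fin l → ℝ) :=
  {ζ | (Sreg AI AC b CI CC ζ).Nonempty}

/-- The set `S_I` of integer parts of feasible solutions. -/
def SI {m nc r : ℕ} (AI : Matrix (Fin m) (Fin r) ℝ) (AC : Matrix (Fin m) (Fin nc) ℝ)
    (b : Fin m → ℝ) : Set (Fin r → ℝ) :=
  {xI | ∃ xC : Fin nc → ℝ, (xI, xC) ∈ XMO AI AC b}

/-- The bounding function `z̄(ζ; x̂_I)`. -/
def zbar {l m nc r : ℕ} (cI : Fin r → ℝ) (cC : Fin nc → ℝ) (AI : Matrix (Fin m) (Fin r) ℝ)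
    (AC : Matrix (Fin m) (Fin nc) ℝ) (b : Fin m → ℝ) (CI : Matrix (Fin l) (Fin r) ℝ)
    (CC : Matrix (Fin l) (Fin nc) ℝ) (ζ : Fin l → ℝ) (xI : Fin r → ℝ) : EReal :=
  ((cI ⬝ᵥ xI : ℝ) : EReal) + zLP cC CC AC (ζ - CI.mulVec xI) (b - AI.mulVec xI)

/-- The set `S*_I(ζ)` of integer parts whose bounding function is active at `ζ`. -/
def SstarI {l m nc r : ℕ} (cI : Fin r → ℝ) (cC : Fin nc → ℝ) (AI : Matrix (Fin m) (Fin r) ℝ)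
    (AC : Matrix (Fin m) (Fin nc) ℝ) (b : Fin m → ℝ) (CI : Matrix (Fin l) (Fin r) ℝ)
    (CC : Matrix (Fin l) (Fin nc) ℝ) (ζ : Fin l → ℝ) : Set (Fin r → ℝ) :=
  {xI ∈ SI AI AC b | zbar cI cC AI AC b CI CC ζ xI = zRVF cI cC AI AC b CI CC ζ}

/-- A description of the restricted value function. -/
def IsDescription {l m nc r : ℕ} (cI : Fin r → ℝ) (cC : Fin nc → ℝ)
    (AI : Matrix (Fin m) (Fin r) ℝ) (AC : Matrix (Fin m) (Fin nc) ℝ) (b : Fin m → ℝ)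
    (CI : Matrix (Fin l) (Fin r) ℝ) (CC : Matrix (Fin l) (Fin nc) ℝ)
    (S : Set (Fin r → ℝ)) : Prop :=
  S ⊆ SI AI AC b ∧
  ∀ ζ ∈ Cdom AI AC b CI CC, ∃ xI ∈ S, ∃ xC : Fin nc → ℝ,
    (xI, xC) ∈ Sreg AI AC b CI CC ζ ∧
    ((cI ⬝ᵥ xI + cC ⬝ᵥ xC : ℝ) : EReal) = zRVF cI cC AI AC b CI CC ζ

/-- A minimal description of the restricted value function. -/
def IsMinimalDescription {l m nc r : ℕ} (cI : Fin r → ℝ) (cC : Fin nc → ℝ)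
    (AI : Matrix (Fin m) (Fin r) ℝ) (AC : Matrix (Fin m) (Fin nc) ℝ) (b : Fin m → ℝ)
    (CI : Matrix (Fin l) (Fin r) ℝ) (CC : Matrix (Fin l) (Fin nc) ℝ)
    (S : Set (Fin r → ℝ)) : Prop :=
  IsDescription cI cC AI AC b CI CC S ∧
  ∀ S' : Set (Fin r → ℝ), S' ⊂ S → ¬ IsDescription cI cC AI AC b CI CC S'

/-- One-sided directional derivative (as a limit in `EReal`). -/
def HasDirDeriv {l : ℕ} (f : (Fin l → ℝ) → EReal) (x d : Fin l → ℝ) (L : EReal) : Prop :=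
  Tendsto (fun t : ℝ => ((t⁻¹ : ℝ) : EReal) * (f (x + t • d) - f x)) (𝓝[>] (0 : ℝ)) (𝓝 L)

/-- The criterion-space vector `Cx ∈ ℝ^{ℓ+1}` of a feasible point. -/
def CritVec {l nc r : ℕ} (cI : Fin r → ℝ) (cC : Fin nc → ℝ) (CI : Matrix (Fin l) (Fin r) ℝ)
    (CC : Matrix (Fin l) (Fin nc) ℝ) (p : (Fin r → ℝ) × (Fin nc → ℝ)) : ℝ × (Fin l → ℝ) :=
  (cI ⬝ᵥ p.1 + cC ⬝ᵥ p.2, CI.mulVec p.1 + CC.mulVec p.2)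

/-- Efficient solutions of the multiobjective MILP. -/
def IsEfficient {l m nc r : ℕ} (cI : Fin r → ℝ) (cC : Fin nc → ℝ)
    (AI : Matrix (Fin m) (Fin r) ℝ) (AC : Matrix (Fin m) (Fin nc) ℝ) (b : Fin m → ℝ)
    (CI : Matrix (Fin l) (Fin r) ℝ) (CC : Matrix (Fin l) (Fin nc) ℝ)
    (p : (Fin r → ℝ) × (Fin nc → ℝ)) : Prop :=
  p ∈ XMO AI AC b ∧ ¬ ∃ q ∈ XMO AI AC b,
    CritVec cI cC CI CC q ≤ CritVec cI cC CI CC p ∧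
    CritVec cI cC CI CC q ≠ CritVec cI cC CI CC p

/-- The upper approximation `z̄ᵏ` built from a set `Sk` of integer parts and bound `U`. -/
def zbark {l m nc r : ℕ} (cI : Fin r → ℝ) (cC : Fin nc → ℝ) (AI : Matrix (Fin m) (Fin r) ℝ)
    (AC : Matrix (Fin m) (Fin nc) ℝ) (b : Fin m → ℝ) (CI : Matrix (Fin l) (Fin r) ℝ)
    (CC : Matrix (Fin l) (Fin nc) ℝ) (Sk : Set (Fin r → ℝ)) (U : ℝ) (ζ : Fin l → ℝ) : EReal :=
  min (sInf {y : EReal | ∃ xI ∈ Sk, y = zbar cI cC AI AC b CI CC ζ xI}) (U : EReal)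

/-!
Since `z̄ᵏ` is nonincreasing, every `p ∈ S(ζ*)` has `z̄ᵏ(C p) ≥ z̄ᵏ(ζ*)`, so maximality of the
gap at `x*` forces `c·x* ≤ c·p`: `x*` is optimal for `z(ζ*)`. Cancelling `z̄ᵏ(ζ*)` needs it finite,
which holds because it is capped by `U` and is a minimum of finitely many values above `⊥`.
Finally `z ≤ z̄(·; x*_I)` everywhere, while `z̄(ζ*; x*_I) ≤ c·x*` since `x*_C` is feasible for the
restricted LP.
-/

lemma EReal.le_of_sub_le_sub_left {w : EReal} (hbot : w ≠ ⊥) (htop : w ≠ ⊤) {a b : ℝ}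
    (h : w - a ≤ w - b) : b ≤ a := by
  lift w to ℝ using ⟨htop, hbot⟩
  rw [← EReal.coe_sub, ← EReal.coe_sub, EReal.coe_le_coe_iff] at h
  linarith

lemma sInf_ne_bot_of_finite {α : Type*} [CompleteLinearOrder α] [Nontrivial α] {s : Set α}
    (hs : s.Finite) (hbot : ⊥ ∉ s) : sInf s ≠ ⊥ := by
  rcases s.eq_empty_or_nonempty with rfl | hne
  · exact sInf_empty (α := α) ▸ top_ne_bot
  · exact fun h => hbot (h ▸ hne.csInf_mem hs)

lemma isMinOn_of_isMaxOn_sub_antitone {α β : Type*} [Preorder β] {F : β → EReal}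
    (hF : Antitone F) {C : α → β} {g : α → ℝ} {s : Set α} {x : α}
    (hbot : F (C x) ≠ ⊥) (htop : F (C x) ≠ ⊤) (hmax : IsMaxOn (fun p => F (C p) - g p) s x) :
    IsMinOn g {p ∈ s | C p ≤ C x} x := by
  refine isMinOn_iff.mpr fun p ⟨hps, hpx⟩ => EReal.le_of_sub_le_sub_left hbot htop ?_
  calc F (C x) - g p ≤ F (C p) - g p := EReal.sub_le_sub (hF hpx) le_rfl
    _ ≤ F (C x) - g x := isMaxOn_iff.mp hmax p hps

section

variable {l m nc r : ℕ} {cI : Fin r → ℝ} {cC : Fin nc → ℝ} {AI : Matrix (Fin m) (Fin r) ℝ}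
  {AC : Matrix (Fin m) (Fin nc) ℝ} {b : Fin m → ℝ} {CI : Matrix (Fin l) (Fin r) ℝ}
  {CC : Matrix (Fin l) (Fin nc) ℝ}

lemma zLP_antitone (β : Fin m → ℝ) : Antitone fun ζ => zLP cC CC AC ζ β := by
  intro ζ₁ ζ₂ h
  refine sInf_le_sInf ?_
  rintro y ⟨x, ⟨hx, hCx, hAx⟩, rfl⟩
  exact ⟨x, ⟨hx, hCx.trans h, hAx⟩, rfl⟩

lemma zbar_antitone (xI : Fin r → ℝ) : Antitone fun ζ => zbar cI cC AI AC b CI CC ζ xI :=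
  fun _ _ h => add_le_add le_rfl (zLP_antitone _ (sub_le_sub_right h (CI.mulVec xI)))

lemma zbark_antitone {Sk : Set (Fin r → ℝ)} {U : ℝ} :
    Antitone (zbark cI cC AI AC b CI CC Sk U) := by
  intro ζ₁ ζ₂ h
  refine min_le_min (le_sInf ?_) le_rfl
  rintro y ⟨xI, hxI, rfl⟩
  exact sInf_le_of_le ⟨xI, hxI, rfl⟩ (zbar_antitone xI h)

lemma zbark_ne_top {Sk : Set (Fin r → ℝ)} {U : ℝ} {ζ : Fin l → ℝ} :
    zbark cI cC AI AC b CI CC Sk U ζ ≠ ⊤ :=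
  ne_top_of_le_ne_top (EReal.coe_ne_top U) (min_le_right _ _)

lemma zbark_ne_bot (hbot : ∀ ζ β, zLP cC CC AC ζ β ≠ ⊥) {Sk : Set (Fin r → ℝ)}
    (hSk : Sk.Finite) {U : ℝ} {ζ : Fin l → ℝ} : zbark cI cC AI AC b CI CC Sk U ζ ≠ ⊥ := by
  refine fun h => (min_eq_bot.mp h).elim (sInf_ne_bot_of_finite ?_ ?_) (EReal.coe_ne_bot U)
  · exact (hSk.image fun xI => zbar cI cC AI AC b CI CC ζ xI).subset
      fun _ ⟨xI, hxI, hy⟩ => ⟨xI, hxI, hy.symm⟩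
  · rintro ⟨xI, -, h⟩
    exact EReal.add_ne_bot_iff.mpr ⟨EReal.coe_ne_bot _, hbot _ _⟩ h.symm

lemma mk_mem_Sreg_iff {xI : Fin r → ℝ} (hxI : IsNatVec xI) (xC : Fin nc → ℝ) (ζ : Fin l → ℝ) :
    (xI, xC) ∈ Sreg AI AC b CI CC ζ ↔
      LPfeas CC AC (ζ - CI.mulVec xI) (b - AI.mulVec xI) xC := by
  simp only [Sreg, XMO, LPfeas, Set.mem_ofPred_eq, hxI, true_and, le_sub_iff_add_le',
    eq_sub_iff_add_eq']
  tauto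

lemma zRVF_le_zbar {xI : Fin r → ℝ} (hxI : IsNatVec xI) (ζ : Fin l → ℝ) :
    zRVF cI cC AI AC b CI CC ζ ≤ zbar cI cC AI AC b CI CC ζ xI := by
  rw [zbar, add_comm, ← EReal.sub_le_iff_le_add (.inl (EReal.coe_ne_bot _))
    (.inl (EReal.coe_ne_top _))]
  refine le_sInf ?_
  rintro y ⟨xC, hxC, rfl⟩
  refine EReal.sub_le_of_le_add' (sInf_le ⟨(xI, xC), ?_, rfl⟩)
  exact (mk_mem_Sreg_iff hxI xC ζ).mpr hxC

lemma zbar_le_of_mem_Sreg {p : (Fin r → ℝ) × (Fin nc → ℝ)} {ζ : Fin l → ℝ}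
    (hp : p ∈ Sreg AI AC b CI CC ζ) :
    zbar cI cC AI AC b CI CC ζ p.1 ≤ ((cI ⬝ᵥ p.1 + cC ⬝ᵥ p.2 : ℝ) : EReal) := by
  rw [zbar, EReal.coe_add]
  exact add_le_add le_rfl (sInf_le ⟨p.2, (mk_mem_Sreg_iff hp.1.1 p.2 ζ).mp hp, rfl⟩)

lemma le_zRVF_of_isMinOn {p : (Fin r → ℝ) × (Fin nc → ℝ)} {ζ : Fin l → ℝ}
    (hp : IsMinOn (fun q => cI ⬝ᵥ q.1 + cC ⬝ᵥ q.2) (Sreg AI AC b CI CC ζ) p) :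
    ((cI ⬝ᵥ p.1 + cC ⬝ᵥ p.2 : ℝ) : EReal) ≤ zRVF cI cC AI AC b CI CC ζ := by
  refine le_sInf ?_
  rintro y ⟨q, hq, rfl⟩
  exact EReal.coe_le_coe_iff.mpr (isMinOn_iff.mp hp q hq)

end

theorem stmt_19_general {l m nc r : ℕ} (cI : Fin r → ℝ) (cC : Fin nc → ℝ) (AI : Matrix (Fin m) (Fin r) ℝ)
    (AC : Matrix (Fin m) (Fin nc) ℝ) (b : Fin m → ℝ) (CI : Matrix (Fin l) (Fin r) ℝ)
    (CC : Matrix (Fin l) (Fin nc) ℝ)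
    (hbot : ∀ (ζ : Fin l → ℝ) (β : Fin m → ℝ), zLP cC CC AC ζ β ≠ ⊥)
    (Sk : Set (Fin r → ℝ)) (hSkfin : Sk.Finite)
    (U : ℝ)
    (xs : (Fin r → ℝ) × (Fin nc → ℝ)) (hxs : xs ∈ XMO AI AC b)
    (hmax : ∀ p ∈ XMO AI AC b,
      zbark cI cC AI AC b CI CC Sk U (CI.mulVec p.1 + CC.mulVec p.2) - ((cI ⬝ᵥ p.1 + cC ⬝ᵥ p.2 : ℝ) : EReal) ≤
        zbark cI cC AI AC b CI CC Sk U (CI.mulVec xs.1 + CC.mulVec xs.2) - ((cI ⬝ᵥ xs.1 + cC ⬝ᵥ xs.2 : ℝ) : EReal)) :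
    zRVF cI cC AI AC b CI CC (CI.mulVec xs.1 + CC.mulVec xs.2) = zbar cI cC AI AC b CI CC (CI.mulVec xs.1 + CC.mulVec xs.2) xs.1 ∧
    (CI.mulVec xs.1 + CC.mulVec xs.2) ∈ {ζ ∈ Cdom AI AC b CI CC | zRVF cI cC AI AC b CI CC ζ = zbar cI cC AI AC b CI CC ζ xs.1} ∧
    {ζ ∈ Cdom AI AC b CI CC | zRVF cI cC AI AC b CI CC ζ = zbar cI cC AI AC b CI CC ζ xs.1}.Nonempty := by
  set ζs := CI.mulVec xs.1 + CC.mulVec xs.2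
  have hxsS : xs ∈ Sreg AI AC b CI CC ζs := ⟨hxs, le_rfl⟩
  have hmin : IsMinOn (fun p => cI ⬝ᵥ p.1 + cC ⬝ᵥ p.2) (Sreg AI AC b CI CC ζs) xs :=
    isMinOn_of_isMaxOn_sub_antitone zbark_antitone (zbark_ne_bot hbot hSkfin) zbark_ne_top
      (isMaxOn_iff.mpr hmax)
  have hz : zRVF cI cC AI AC b CI CC ζs = zbar cI cC AI AC b CI CC ζs xs.1 :=
    le_antisymm (zRVF_le_zbar hxs.1 ζs)
      ((zbar_le_of_mem_Sreg hxsS).trans (le_zRVF_of_isMinOn hmin))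
  exact ⟨hz, ⟨⟨xs, hxsS⟩, hz⟩, ζs, ⟨xs, hxsS⟩, hz⟩

theorem stmt_19 {l m nc r : ℕ} (cI : Fin r → ℝ) (cC : Fin nc → ℝ) (AI : Matrix (Fin m) (Fin r) ℝ)
    (AC : Matrix (Fin m) (Fin nc) ℝ) (b : Fin m → ℝ) (CI : Matrix (Fin l) (Fin r) ℝ)
    (CC : Matrix (Fin l) (Fin nc) ℝ)
    (hne : (XMO AI AC b).Nonempty) (hbdd : Bornology.IsBounded (XMO AI AC b))
    (hbot : ∀ (ζ : Fin l → ℝ) (β : Fin m → ℝ), zLP cC CC AC ζ β ≠ ⊥)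
    (Sk : Set (Fin r → ℝ)) (hSk : Sk ⊆ SI AI AC b) (hSkfin : Sk.Finite)
    (U : ℝ) (hU : ∀ ζ ∈ Cdom AI AC b CI CC, zRVF cI cC AI AC b CI CC ζ ≤ (U : EReal))
    (xs : (Fin r → ℝ) × (Fin nc → ℝ)) (hxs : xs ∈ XMO AI AC b)
    (hmax : ∀ p ∈ XMO AI AC b,
      zbark cI cC AI AC b CI CC Sk U (CI.mulVec p.1 + CC.mulVec p.2) - ((cI ⬝ᵥ p.1 + cC ⬝ᵥ p.2 : ℝ) : EReal) ≤
        zbark cI cC AI AC b CI CC Sk U (CI.mulVec xs.1 + CC.mulVec xs.2) - ((cI ⬝ᵥ xs.1 + cC ⬝ᵥ xs.2 : ℝ) : EReal)) :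
    zRVF cI cC AI AC b CI CC (CI.mulVec xs.1 + CC.mulVec xs.2) = zbar cI cC AI AC b CI CC (CI.mulVec xs.1 + CC.mulVec xs.2) xs.1 ∧
    (CI.mulVec xs.1 + CC.mulVec xs.2) ∈ {ζ ∈ Cdom AI AC b CI CC | zRVF cI cC AI AC b CI CC ζ = zbar cI cC AI AC b CI CC ζ xs.1} ∧
    {ζ ∈ Cdom AI AC b CI CC | zRVF cI cC AI AC b CI CC ζ = zbar cI cC AI AC b CI CC ζ xs.1}.Nonempty :=
  stmt_19_general cI cC AI AC b CI CC hbot Sk hSkfin U xs hxs hmax
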